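/- arXiv:2108.01325 — 10 statements merged into one kernel-verified Lean document; each statement's English description precedes it below -/
import Mathlib

section
/- Let G be an r-regular finite simple graph (r ≥ 1) with n vertices and m edges, with incidence matrix R and signless Laplacian Q_G = R·Rᵀ, and let M be the signless Laplacian matrix of the Q-graph Q(G), i.e. the block matrix M = [[r·I_V, R],[Rᵀ, (2r−2)·I_E + RᵀR]] indexed by V ⊕ E. Then for every real number t one has (t+2−2r)^n · det(t·I_{V⊕E} − M) = (t+2−2r)^m · det((t+2−2r)(t−r)·I_V + (r−t−1)·Q_G). -/
open Matrix

/-- The vertex-edge incidence matrix of a simple graph. -/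
noncomputable def incMat {V : Type*} [Fintype V] [DecidableEq V] (G : SimpleGraph V) :
    Matrix V G.edgeSet ℝ :=
  Matrix.of fun v e => if v ∈ (e : Sym2 V) then 1 else 0

/-- The signless Laplacian of the Q-graph of an r-regular graph, as a block matrix. -/
noncomputable def QQ {V : Type*} [Fintype V] [DecidableEq V] (G : SimpleGraph V) (r : ℕ) :
    Matrix (V ⊕ G.edgeSet) (V ⊕ G.edgeSet) ℝ :=
  Matrix.fromBlocks ((r : ℝ) • 1) (incMat G) (incMat G)ᵀ
    ((2 * (r : ℝ) - 2) • 1 + (incMat G)ᵀ * incMat G)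

/-!
Write `p = t - r` and `s = t + 2 - 2r`, so that `t • 1 - M` has blocks `p • 1`, `-R`, `-Rᵀ`,
`s • 1 - RᵀR`. Eliminating the scalar block `p • 1` (right multiplication by
`[[1, R], [0, p • 1]]`) turns its determinant into that of `(p s) • 1 - (p + 1) • RᵀR` on the edge
space, up to powers of `p`, and Sylvester's identity `s ^ |V| det (s - XY) = s ^ |E| det (s - YX)`
moves it to the vertex space. Cancelling the powers of `p` needs `p ≠ 0`; the value `t = r` then
follows by continuity in `t`.
-/

section BlockDeterminants

variable {R : Type*} [CommRing R] {m n : Type*} [Fintype m] [Fintype n]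
  [DecidableEq m] [DecidableEq n]

theorem det_smul_one_sub_mul_comm (A : Matrix m n R) (B : Matrix n m R) (s : R) :
    s ^ Fintype.card n * (s • (1 : Matrix m m R) - A * B).det
      = s ^ Fintype.card m * (s • (1 : Matrix n n R) - B * A).det := by
  simpa [eval_charpoly, smul_one_eq_diagonal] using
    congrArg (Polynomial.eval s) (charpoly_mul_comm' A B)

theorem pow_mul_det_fromBlocks_smul_one (p : R) (B : Matrix m n R) (C : Matrix n m R)
    (D : Matrix n n R) :
    p ^ Fintype.card n * (fromBlocks (p • 1) B C D).det
      = p ^ Fintype.card m * (p • D - C * B).det := by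
  have h : fromBlocks (p • 1) B C D * fromBlocks 1 (-B) 0 (p • 1)
      = fromBlocks (p • 1) 0 C (p • D - C * B) := by
    simp [fromBlocks_multiply, sub_eq_add_neg, add_comm]
  have := congrArg det h
  rw [det_mul, det_fromBlocks_zero₂₁, det_fromBlocks_zero₁₂] at this
  simpa [det_smul, mul_comm] using this

theorem pow_mul_det_fromBlocks_neg_transpose_of_ne_zero [IsDomain R] (B : Matrix m n R) {p : R}
    (hp : p ≠ 0) (s : R) :
    s ^ Fintype.card m * (fromBlocks (p • 1) (-B) (-Bᵀ) (s • 1 - Bᵀ * B)).det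
      = s ^ Fintype.card n * ((p * s) • 1 - (p + 1) • (B * Bᵀ)).det := by
  have schur := pow_mul_det_fromBlocks_smul_one p (-B) (-Bᵀ) (s • 1 - Bᵀ * B)
  have sylvester := det_smul_one_sub_mul_comm ((p + 1) • Bᵀ) B (p * s)
  have hblock : p • (s • (1 : Matrix n n R) - Bᵀ * B) - -Bᵀ * -B
      = (p * s) • 1 - (p + 1) • Bᵀ * B := by
    rw [Matrix.neg_mul, Matrix.mul_neg, neg_neg, Matrix.smul_mul, smul_sub, smul_smul]
    module
  rw [hblock] at schur
  rw [Matrix.mul_smul] at sylvester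
  refine mul_left_cancel₀ (pow_ne_zero (Fintype.card m + Fintype.card n) hp) ?_
  linear_combination (s ^ Fintype.card m * p ^ Fintype.card m) * schur
    + p ^ Fintype.card m * sylvester

theorem pow_mul_det_fromBlocks_neg_transpose (B : Matrix m n ℝ) (a c t : ℝ) :
    (t + c) ^ Fintype.card m *
        (fromBlocks ((t - a) • 1) (-B) (-Bᵀ) ((t + c) • 1 - Bᵀ * B)).det
      = (t + c) ^ Fintype.card n * (((t - a) * (t + c)) • 1 - (t - a + 1) • (B * Bᵀ)).det := by
  revert t
  refine funext_iff.mp (Continuous.ext_on (dense_compl_singleton a) ?_ ?_ fun t ht => ?_)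
  · fun_prop
  · fun_prop
  · exact pow_mul_det_fromBlocks_neg_transpose_of_ne_zero B (sub_ne_zero.2 ht) (t + c)

end BlockDeterminants

theorem stmt0_general {V : Type*} [Fintype V] [DecidableEq V] (G : SimpleGraph V)
    [DecidableRel G.Adj] (r : ℕ)
    (t : ℝ) :
    (t + 2 - 2 * (r:ℝ)) ^ (Fintype.card V) * Matrix.det (t • (1 : Matrix (V ⊕ G.edgeSet) (V ⊕ G.edgeSet) ℝ) - QQ G r)
      = (t + 2 - 2 * (r:ℝ)) ^ (Fintype.card G.edgeSet) *
        Matrix.det (((t + 2 - 2 * (r:ℝ)) * (t - (r:ℝ))) • (1 : Matrix V V ℝ) + ((r:ℝ) - t - 1) • (incMat G * (incMat G)ᵀ)) := by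
  have hQ : t • 1 - QQ G r = fromBlocks ((t - r) • 1) (-incMat G) (-(incMat G)ᵀ)
      ((t + (2 - 2 * r)) • 1 - (incMat G)ᵀ * incMat G) := by
    rw [QQ, ← fromBlocks_one, fromBlocks_smul, sub_eq_add_neg, fromBlocks_neg, fromBlocks_add]
    congr 1 <;> module
  have hRHS : ((t + 2 - 2 * r) * (t - r)) • 1 + (r - t - 1) • (incMat G * (incMat G)ᵀ)
      = ((t - r) * (t + (2 - 2 * r))) • (1 : Matrix V V ℝ) - (t - r + 1) • (incMat G * (incMat G)ᵀ) := by
    module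
  rw [hQ, hRHS, add_sub_assoc]
  exact pow_mul_det_fromBlocks_neg_transpose (incMat G) r (2 - 2 * r) t

theorem stmt0 {V : Type*} [Fintype V] [DecidableEq V] (G : SimpleGraph V)
    [DecidableRel G.Adj] (r : ℕ) (hr : 1 ≤ r) (hreg : G.IsRegularOfDegree r)
    (t : ℝ) :
    (t + 2 - 2 * (r:ℝ)) ^ (Fintype.card V) * Matrix.det (t • (1 : Matrix (V ⊕ G.edgeSet) (V ⊕ G.edgeSet) ℝ) - QQ G r)
      = (t + 2 - 2 * (r:ℝ)) ^ (Fintype.card G.edgeSet) *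
        Matrix.det (((t + 2 - 2 * (r:ℝ)) * (t - (r:ℝ))) • (1 : Matrix V V ℝ) + ((r:ℝ) - t - 1) • (incMat G * (incMat G)ᵀ)) :=
  stmt0_general G r t
end

section
/- Let G be an r-regular finite simple graph with r ≥ 2, n vertices and m edges (so m ≥ n), and let λ_1, …, λ_n be the eigenvalues of its signless Laplacian Q_G listed with multiplicity. Then the characteristic polynomial of the signless Laplacian M of the Q-graph Q(G) satisfies det(t·I_{V⊕E} − M) = (t+2−2r)^{m−n} · ∏_{k=1}^{n} ((t+2−2r)(t−r) + (r−t−1)·λ_k) for all real t. -/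
open Matrix

/-!
Subtracting `Rᵀ` times the vertex rows from the edge rows turns `t • 1 - M` into a block matrix
whose edge-edge block is the scalar `(t + 2 - 2r) • 1`. Its Schur complement is
`(t + 2 - 2r)(t - r) • 1 - (t - r + 1) • R Rᵀ`, whose determinant is read off the eigenvalues of
`Q_G = R Rᵀ`; the factor `(t + 2 - 2r) ^ (m - n)` is the mismatch between the sizes of the two
blocks, and `m ≥ n` because `2m = rn`. This proves the identity for `t ≠ 2r - 2`, and both sides
are continuous in `t`.
-/

namespace Matrix

variable {m n : Type*} [Fintype m] [Fintype n] [DecidableEq m] [DecidableEq n]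

theorem det_fromBlocks_add_mul_left {R : Type*} [CommRing R] (A : Matrix m m R)
    (B : Matrix m n R) (C : Matrix n m R) (D : Matrix n n R) (X : Matrix n m R) :
    (fromBlocks A B (C + X * A) (D + X * B)).det = (fromBlocks A B C D).det := by
  have : fromBlocks A B (C + X * A) (D + X * B) = fromBlocks 1 0 X 1 * fromBlocks A B C D := by
    simp [fromBlocks_multiply, add_comm]
  rw [this, det_mul, det_fromBlocks_zero₁₂, det_one, det_one, one_mul, one_mul]

variable {K : Type*} [Field K]

theorem det_fromBlocks_smul_one₂₂ (hmn : Fintype.card m ≤ Fintype.card n) {b : K} (hb : b ≠ 0)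
    (A : Matrix m m K) (B : Matrix m n K) (C : Matrix n m K) :
    (fromBlocks A B C (b • 1)).det =
      b ^ (Fintype.card n - Fintype.card m) * (b • A - B * C).det := by
  have hfactor :
      fromBlocks A B C (b • 1) = fromBlocks 1 0 0 (b • 1) * fromBlocks A B (b⁻¹ • C) 1 := by
    simp [fromBlocks_multiply, smul_smul, hb]
  have hschur : A - B * (b⁻¹ • C) = b⁻¹ • (b • A - B * C) := by
    rw [smul_sub, smul_smul, inv_mul_cancel₀ hb, one_smul, Matrix.mul_smul]
  rw [hfactor, det_mul, det_fromBlocks_one₂₂, hschur, det_fromBlocks_zero₁₂, det_one, one_mul,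
    det_smul, det_smul, det_one, mul_one, inv_pow, pow_sub₀ b hb hmn, mul_assoc]

theorem det_smul_one_sub_smul_eq_prod {P : Matrix n n K} {lam : Fin (Fintype.card n) → K}
    (hlam : ∀ s : K, (s • (1 : Matrix n n K) - P).det = ∏ k, (s - lam k)) (x c : K) :
    (x • (1 : Matrix n n K) - c • P).det = ∏ k, (x - c * lam k) := by
  rcases eq_or_ne c 0 with rfl | hc
  · simp
  have : x • (1 : Matrix n n K) - c • P = c • ((x / c) • 1 - P) := by
    rw [smul_sub, smul_smul, mul_div_cancel₀ x hc]
  rw [this, det_smul, hlam, ← Fin.prod_const, ← Finset.prod_mul_distrib]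
  refine Finset.prod_congr rfl fun k _ => ?_
  field_simp

end Matrix

theorem SimpleGraph.IsRegularOfDegree.card_le_card_edgeSet {V : Type*} [Fintype V]
    {G : SimpleGraph V} [DecidableRel G.Adj] {r : ℕ} (hreg : G.IsRegularOfDegree r) (hr : 2 ≤ r) :
    Fintype.card V ≤ Fintype.card G.edgeSet := by
  have hsum := G.sum_degrees_eq_twice_card_edges
  rw [Finset.sum_congr rfl fun v _ => hreg v, Finset.sum_const, Finset.card_univ, smul_eq_mul,
    G.edgeFinset_card] at hsum
  nlinarith

theorem smul_one_sub_QQ {V : Type*} [Fintype V] [DecidableEq V] (G : SimpleGraph V) (r : ℕ)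
    (t : ℝ) :
    t • (1 : Matrix (V ⊕ G.edgeSet) (V ⊕ G.edgeSet) ℝ) - QQ G r =
      fromBlocks ((t - r) • (1 : Matrix V V ℝ)) (-incMat G) (-(incMat G)ᵀ)
        ((t + 2 - 2 * r) • (1 : Matrix G.edgeSet G.edgeSet ℝ) - (incMat G)ᵀ * incMat G) := by
  rw [QQ, ← fromBlocks_one, fromBlocks_smul, sub_eq_add_neg, fromBlocks_neg, fromBlocks_add]
  congr 1 <;> module

theorem det_smul_one_sub_QQ {V : Type*} [Fintype V] [DecidableEq V] (G : SimpleGraph V)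
    [DecidableRel G.Adj] (r : ℕ) (hnm : Fintype.card V ≤ Fintype.card G.edgeSet)
    {lam : Fin (Fintype.card V) → ℝ}
    (hlam : ∀ s : ℝ,
      (s • (1 : Matrix V V ℝ) - incMat G * (incMat G)ᵀ).det = ∏ k, (s - lam k))
    {t : ℝ} (ht : t + 2 - 2 * (r : ℝ) ≠ 0) :
    (t • (1 : Matrix (V ⊕ G.edgeSet) (V ⊕ G.edgeSet) ℝ) - QQ G r).det
      = (t + 2 - 2 * (r : ℝ)) ^ (Fintype.card G.edgeSet - Fintype.card V) *
        ∏ k, ((t + 2 - 2 * (r : ℝ)) * (t - (r : ℝ)) + ((r : ℝ) - t - 1) * lam k) := by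
  set R := incMat G
  set a : ℝ := t - r
  set b : ℝ := t + 2 - 2 * r
  have hC : -Rᵀ + -Rᵀ * (a • (1 : Matrix V V ℝ)) = -(a + 1) • Rᵀ := by
    rw [Matrix.mul_smul, Matrix.mul_one]
    module
  have hD : b • (1 : Matrix G.edgeSet G.edgeSet ℝ) - Rᵀ * R + -Rᵀ * -R = b • 1 := by
    rw [Matrix.neg_mul, Matrix.mul_neg, neg_neg, sub_add_cancel]
  have hSchur : b • a • (1 : Matrix V V ℝ) - -R * (-(a + 1) • Rᵀ) =
      (b * a) • 1 - (a + 1) • (R * Rᵀ) := by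
    rw [smul_smul, neg_smul, Matrix.neg_mul, Matrix.mul_neg, neg_neg, Matrix.mul_smul]
  rw [smul_one_sub_QQ, ← det_fromBlocks_add_mul_left _ _ _ _ (-Rᵀ), hC, hD,
    det_fromBlocks_smul_one₂₂ hnm ht, hSchur, det_smul_one_sub_smul_eq_prod hlam]
  congr 1
  refine Finset.prod_congr rfl fun k _ => ?_
  ring

theorem stmt1 {V : Type*} [Fintype V] [DecidableEq V] (G : SimpleGraph V)
    [DecidableRel G.Adj] (r : ℕ) (hr : 2 ≤ r) (hreg : G.IsRegularOfDegree r)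
    (lam : Fin (Fintype.card V) → ℝ)
    (hlam : ∀ s : ℝ,
      (s • (1 : Matrix V V ℝ) - incMat G * (incMat G)ᵀ).det = ∏ k, (s - lam k))
    (t : ℝ) :
    (t • (1 : Matrix (V ⊕ G.edgeSet) (V ⊕ G.edgeSet) ℝ) - QQ G r).det
      = (t + 2 - 2 * (r : ℝ)) ^ (Fintype.card G.edgeSet - Fintype.card V) *
        ∏ k, ((t + 2 - 2 * (r : ℝ)) * (t - (r : ℝ)) + ((r : ℝ) - t - 1) * lam k) := by
  have hnm := hreg.card_le_card_edgeSet hr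
  revert t
  rw [← funext_iff]
  refine Continuous.ext_on (dense_compl_singleton (2 * (r : ℝ) - 2)) (by fun_prop) (by fun_prop)
    fun t ht => det_smul_one_sub_QQ G r hnm hlam fun h => ht ?_
  rw [Set.mem_singleton_iff]
  linarith
end

section
/- Let G be an r-regular finite simple graph with incidence matrix R and signless Laplacian Q_G = R·Rᵀ, let x ∈ ℝ^V satisfy Q_G·x = q·x for some real q, and let μ ∈ ℝ be a root of (t+2−2r)(t−r) + (r−t−1)·q = 0. Then the vector X ∈ ℝ^{V⊕E} whose V-component is (μ+2−2r−q)·x and whose E-component is Rᵀ·x satisfies M·X = μ·X, where M is the signless Laplacian of the Q-graph Q(G). -/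
/-!
For a block matrix `[[a • 1, R], [Rᵀ, b • 1 + Rᵀ R]]`, since `R Rᵀ x = q x` gives
`(Rᵀ R)(Rᵀ x) = q (Rᵀ x)`, the two block rows applied to `(c • x, Rᵀ x)` are `(a c + q) • x`
and `(c + b + q) • Rᵀ x`. For `a = r`, `b = 2r - 2` and `c = μ + 2 - 2r - q` the second
coefficient is `μ` by the choice of `c`, and the first equals `μ c` exactly by the quadratic
equation for `μ`.
-/

open Matrix

theorem transpose_mul_mulVec_eq_smul {m n K : Type*} [Fintype m] [Fintype n] [CommRing K]
    (B : Matrix m n K) (q : K) (x : m → K) (hx : (B * Bᵀ) *ᵥ x = q • x) :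
    (Bᵀ * B) *ᵥ (Bᵀ *ᵥ x) = q • (Bᵀ *ᵥ x) := by
  rw [← mulVec_mulVec, mulVec_mulVec x B Bᵀ, hx, mulVec_smul]

theorem fromBlocks_mulVec_elim_eq_smul {m n K : Type*} [Fintype m] [Fintype n]
    [DecidableEq m] [DecidableEq n] [CommRing K] (B : Matrix m n K) (a b c q μ : K)
    (x : m → K) (hx : (B * Bᵀ) *ᵥ x = q • x)
    (hvert : a * c + q = μ * c) (hedge : c + b + q = μ) :
    fromBlocks (a • 1) B Bᵀ (b • 1 + Bᵀ * B) *ᵥ Sum.elim (c • x) (Bᵀ *ᵥ x)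
      = μ • Sum.elim (c • x) (Bᵀ *ᵥ x) := by
  have top : (a • 1) *ᵥ (c • x) + B *ᵥ (Bᵀ *ᵥ x) = μ • c • x := by
    rw [mulVec_mulVec, hx, smul_mulVec, one_mulVec, smul_smul, smul_smul, ← add_smul, hvert]
  have bottom : Bᵀ *ᵥ (c • x) + (b • 1 + Bᵀ * B) *ᵥ (Bᵀ *ᵥ x) = μ • Bᵀ *ᵥ x := by
    rw [add_mulVec, transpose_mul_mulVec_eq_smul B q x hx, smul_mulVec, one_mulVec, mulVec_smul,
      ← add_assoc, ← add_smul, ← add_smul, hedge]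
  rw [fromBlocks_mulVec, Sum.elim_comp_inl, Sum.elim_comp_inr, top, bottom]
  ext (v | e) <;> rfl

theorem stmt2_general {V : Type*} [Fintype V] [DecidableEq V] (G : SimpleGraph V)
    [DecidableRel G.Adj] (r : ℕ)
    (q μ : ℝ) (x : V → ℝ)
    (hx : (incMat G * (incMat G)ᵀ) *ᵥ x = q • x)
    (hμ : (μ + 2 - 2 * (r : ℝ)) * (μ - (r : ℝ)) + ((r : ℝ) - μ - 1) * q = 0) :
    QQ G r *ᵥ Sum.elim ((μ + 2 - 2 * (r : ℝ) - q) • x) ((incMat G)ᵀ *ᵥ x)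
      = μ • Sum.elim ((μ + 2 - 2 * (r : ℝ) - q) • x) ((incMat G)ᵀ *ᵥ x) :=
  fromBlocks_mulVec_elim_eq_smul (incMat G) _ _ _ q μ x hx
    (by linear_combination -hμ) (by ring)

theorem stmt2 {V : Type*} [Fintype V] [DecidableEq V] (G : SimpleGraph V)
    [DecidableRel G.Adj] (r : ℕ) (hreg : G.IsRegularOfDegree r)
    (q μ : ℝ) (x : V → ℝ)
    (hx : (incMat G * (incMat G)ᵀ) *ᵥ x = q • x)
    (hμ : (μ + 2 - 2 * (r : ℝ)) * (μ - (r : ℝ)) + ((r : ℝ) - μ - 1) * q = 0) :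
    QQ G r *ᵥ Sum.elim ((μ + 2 - 2 * (r : ℝ) - q) • x) ((incMat G)ᵀ *ᵥ x)
      = μ • Sum.elim ((μ + 2 - 2 * (r : ℝ) - q) • x) ((incMat G)ᵀ *ᵥ x) :=
  stmt2_general G r q μ x hx hμ
end

section
/- Let G be an r-regular finite simple graph with incidence matrix R, and let y ∈ ℝ^E satisfy R·y = 0. Then the vector (0, y) ∈ ℝ^{V⊕E} (zero on the V-component, y on the E-component) satisfies M·(0, y) = (2r−2)·(0, y), where M is the signless Laplacian of the Q-graph Q(G); in particular 2r−2 is an eigenvalue of M whenever R has nontrivial kernel. -/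
open Matrix

namespace Matrix

variable {m n α : Type*} [Fintype m] [Fintype n] [Semiring α]

theorem fromBlocks_mulVec_elim_zero (A : Matrix m m α) (B : Matrix m n α) (C : Matrix n m α)
    (D : Matrix n n α) (y : n → α) :
    fromBlocks A B C D *ᵥ Sum.elim 0 y = Sum.elim (B *ᵥ y) (D *ᵥ y) := by
  simp [fromBlocks_mulVec]

theorem smul_one_add_transpose_mul_mulVec_of_mulVec_eq_zero [DecidableEq n] (c : α)
    (R : Matrix m n α) {y : n → α} (hy : R *ᵥ y = 0) :
    (c • 1 + Rᵀ * R) *ᵥ y = c • y := by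
  rw [add_mulVec, smul_mulVec, one_mulVec, ← mulVec_mulVec, hy, mulVec_zero, add_zero]

end Matrix

theorem Sum.smul_elim {m n M α : Type*} [SMul M α] (c : M) (f : m → α) (g : n → α) :
    c • Sum.elim f g = Sum.elim (c • f) (c • g) := by
  ext (i | i) <;> rfl

theorem QQ_mulVec_elim_zero_of_incMat_mulVec_eq_zero {V : Type*} [Fintype V] [DecidableEq V]
    (G : SimpleGraph V) [DecidableRel G.Adj] (r : ℕ) {y : G.edgeSet → ℝ} (hy : incMat G *ᵥ y = 0) :
    QQ G r *ᵥ Sum.elim (0 : V → ℝ) y = (2 * (r : ℝ) - 2) • Sum.elim (0 : V → ℝ) y := by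
  rw [QQ, fromBlocks_mulVec_elim_zero, hy,
    smul_one_add_transpose_mul_mulVec_of_mulVec_eq_zero _ _ hy, Sum.smul_elim, smul_zero]

theorem stmt3_general {V : Type*} [Fintype V] [DecidableEq V] (G : SimpleGraph V)
    [DecidableRel G.Adj] (r : ℕ) (y : G.edgeSet → ℝ) (hy : incMat G *ᵥ y = 0) :
    QQ G r *ᵥ Sum.elim (0 : V → ℝ) y = (2 * (r : ℝ) - 2) • Sum.elim (0 : V → ℝ) y ∧
    (y ≠ 0 → ∃ z : V ⊕ G.edgeSet → ℝ, z ≠ 0 ∧ QQ G r *ᵥ z = (2 * (r : ℝ) - 2) • z) := by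
  have eigen := QQ_mulVec_elim_zero_of_incMat_mulVec_eq_zero G r hy
  refine ⟨eigen, fun hy₀ => ⟨Sum.elim 0 y, ?_, eigen⟩⟩
  simpa only [Sum.elim_zero_zero] using (Sum.elim_injective' (f := (0 : V → ℝ))).ne hy₀

theorem stmt3 {V : Type*} [Fintype V] [DecidableEq V] (G : SimpleGraph V)
    [DecidableRel G.Adj] (r : ℕ) (hreg : G.IsRegularOfDegree r)
    (y : G.edgeSet → ℝ) (hy : incMat G *ᵥ y = 0) :
    QQ G r *ᵥ Sum.elim (0 : V → ℝ) y = (2 * (r : ℝ) - 2) • Sum.elim (0 : V → ℝ) y ∧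
    (y ≠ 0 → ∃ z : V ⊕ G.edgeSet → ℝ, z ≠ 0 ∧ QQ G r *ᵥ z = (2 * (r : ℝ) - 2) • z) :=
  stmt3_general G r y hy
end

section
/- Let G be an r-regular finite simple graph with incidence matrix R and signless Laplacian Q_G = R·Rᵀ, let x ∈ ℝ^V satisfy Q_G·x = q·x with q > 0, and let μ₊ ≠ μ₋ be the two real roots of (t+2−2r)(t−r) + (r−t−1)·q = 0. Then the vectors X₊, X₋ ∈ ℝ^{V⊕E}, where X_± has V-component (μ_± + 2 − 2r − q)·x and E-component Rᵀ·x, are orthogonal: ⟨X₊, X₋⟩ = 0. -/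
/-!
In the coordinate `s = μ + 2 - 2r - q` the defining quadratic of `μ±` becomes
`s² + (r + q - 2) s - q = 0`, so by Vieta the two vertex coefficients multiply to `-q`.
The edge components contribute `‖Rᵀx‖² = ⟨x, R Rᵀ x⟩ = q ‖x‖²`, which cancels the vertex part.
-/

open Matrix

theorem Matrix.transpose_mulVec_dotProduct_self {m n α : Type*} [Fintype m] [Fintype n]
    [CommSemiring α] (R : Matrix m n α) (x : m → α) :
    (Rᵀ *ᵥ x) ⬝ᵥ (Rᵀ *ᵥ x) = x ⬝ᵥ ((R * Rᵀ) *ᵥ x) := by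
  rw [← mulVec_mulVec, dotProduct_mulVec, ← mulVec_transpose, transpose_transpose,
    dotProduct_comm]

theorem mul_eq_of_ne_of_quadratic_eq_zero {K : Type*} [CommRing K] [IsDomain K] {a b B C : K}
    (hab : a ≠ b) (ha : a * a + B * a + C = 0) (hb : b * b + B * b + C = 0) : a * b = C := by
  have hsum : a + b + B = 0 :=
    (mul_eq_zero.mp (by linear_combination ha - hb : (a - b) * (a + b + B) = 0)).resolve_left
      (sub_ne_zero.mpr hab)
  linear_combination a * hsum - ha

theorem stmt4_general {V : Type*} [Fintype V] [DecidableEq V] (G : SimpleGraph V)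
    [DecidableRel G.Adj] (r : ℕ)
    (q : ℝ) (x : V → ℝ)
    (hx : (incMat G * (incMat G)ᵀ) *ᵥ x = q • x)
    (μp μm : ℝ) (hne : μp ≠ μm)
    (hμp : (μp + 2 - 2 * (r : ℝ)) * (μp - (r : ℝ)) + ((r : ℝ) - μp - 1) * q = 0)
    (hμm : (μm + 2 - 2 * (r : ℝ)) * (μm - (r : ℝ)) + ((r : ℝ) - μm - 1) * q = 0) :
    dotProduct (Sum.elim ((μp + 2 - 2 * (r : ℝ) - q) • x) ((incMat G)ᵀ *ᵥ x))
      (Sum.elim ((μm + 2 - 2 * (r : ℝ) - q) • x) ((incMat G)ᵀ *ᵥ x)) = 0 := by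
  have hprod : (μp + 2 - 2 * r - q) * (μm + 2 - 2 * r - q) = -q :=
    mul_eq_of_ne_of_quadratic_eq_zero (B := r + q - 2) (by contrapose! hne; linarith)
      (by linear_combination hμp) (by linear_combination hμm)
  have hedges : ((incMat G)ᵀ *ᵥ x) ⬝ᵥ ((incMat G)ᵀ *ᵥ x) = q * (x ⬝ᵥ x) := by
    rw [transpose_mulVec_dotProduct_self, hx, dotProduct_smul, smul_eq_mul]
  rw [sumElim_dotProduct_sumElim, smul_dotProduct, dotProduct_smul, smul_eq_mul, smul_eq_mul,
    hedges]
  linear_combination (x ⬝ᵥ x) * hprod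

theorem stmt4 {V : Type*} [Fintype V] [DecidableEq V] (G : SimpleGraph V)
    [DecidableRel G.Adj] (r : ℕ) (hreg : G.IsRegularOfDegree r)
    (q : ℝ) (hq : 0 < q) (x : V → ℝ)
    (hx : (incMat G * (incMat G)ᵀ) *ᵥ x = q • x)
    (μp μm : ℝ) (hne : μp ≠ μm)
    (hμp : (μp + 2 - 2 * (r : ℝ)) * (μp - (r : ℝ)) + ((r : ℝ) - μp - 1) * q = 0)
    (hμm : (μm + 2 - 2 * (r : ℝ)) * (μm - (r : ℝ)) + ((r : ℝ) - μm - 1) * q = 0) :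
    dotProduct (Sum.elim ((μp + 2 - 2 * (r : ℝ) - q) • x) ((incMat G)ᵀ *ᵥ x))
      (Sum.elim ((μm + 2 - 2 * (r : ℝ) - q) • x) ((incMat G)ᵀ *ᵥ x)) = 0 :=
  stmt4_general G r q x hx μp μm hne hμp hμm
end

section
/- Let G be a connected r-regular bipartite finite simple graph with bipartition V = V₁ ∪ V₂, and let z ∈ ℝ^V be the vector with z_u = 1 for u ∈ V₁ and z_u = −1 for u ∈ V₂. Then the vector (z, 0) ∈ ℝ^{V⊕E} satisfies M·(z, 0) = r·(z, 0), where M is the signless Laplacian of the Q-graph Q(G); in particular r is a signless Laplacian eigenvalue of Q(G). -/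
open Matrix

/-! In a bipartite graph the ±1 colouring `z` sums to zero over the two endpoints of every edge,
so `Rᵀ z = 0`. The off-diagonal blocks of `M` then do not see `(z, 0)`, and the `r • I` block
scales it by `r`. -/

section

variable {V : Type*} [Fintype V] [DecidableEq V] {G : SimpleGraph V}

theorem incMat_transpose_mulVec_mk {a b : V} (h : G.Adj a b) (x : V → ℝ) :
    ((incMat G)ᵀ *ᵥ x) ⟨s(a, b), h⟩ = x a + x b := by
  have hterm : ∀ v, (if v ∈ s(a, b) then (1 : ℝ) else 0) * x v =
      (if v = a then x a else 0) + (if v = b then x b else 0) := by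
    intro v
    by_cases hva : v = a <;> by_cases hvb : v = b <;> simp_all [h.ne]
  simp only [mulVec, dotProduct, transpose_apply, incMat, of_apply, hterm,
    Finset.sum_add_distrib, Finset.sum_ite_eq', Finset.mem_univ, if_true]

theorem incMat_transpose_mulVec_eq_zero {x : V → ℝ} (hx : ∀ a b, G.Adj a b → x a + x b = 0) :
    (incMat G)ᵀ *ᵥ x = 0 := by
  funext ⟨e, he⟩
  induction e using Sym2.ind with
  | _ a b => exact (incMat_transpose_mulVec_mk he x).trans (hx a b he)

theorem QQ_mulVec_sumElim_zero_of_incMat_transpose_mulVec_eq_zero [DecidableRel G.Adj] (r : ℕ)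
    {x : V → ℝ} (hx : (incMat G)ᵀ *ᵥ x = 0) :
    QQ G r *ᵥ Sum.elim x 0 = (r : ℝ) • Sum.elim x 0 := by
  rw [QQ, fromBlocks_mulVec]
  ext (v | e) <;> simp [hx, smul_mulVec]

end

theorem stmt5_general {V : Type*} [Fintype V] [DecidableEq V] (G : SimpleGraph V)
    [DecidableRel G.Adj] (r : ℕ)
    (hconn : G.Connected)
    (V₁ : Set V) [DecidablePred (· ∈ V₁)]
    (hbip : ∀ a b, G.Adj a b → (a ∈ V₁ ↔ b ∉ V₁))
    (z : V → ℝ) (hz : ∀ u, z u = if u ∈ V₁ then 1 else -1) :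
    QQ G r *ᵥ Sum.elim z (0 : G.edgeSet → ℝ) = (r : ℝ) • Sum.elim z (0 : G.edgeSet → ℝ) ∧
    ∃ X : V ⊕ G.edgeSet → ℝ, X ≠ 0 ∧ QQ G r *ᵥ X = (r : ℝ) • X := by
  have hz_adj : ∀ a b, G.Adj a b → z a + z b = 0 := by
    intro a b hab
    have hside := hbip a b hab
    by_cases ha : a ∈ V₁ <;> simp_all
  have heig := QQ_mulVec_sumElim_zero_of_incMat_transpose_mulVec_eq_zero r
    (incMat_transpose_mulVec_eq_zero hz_adj)
  refine ⟨heig, Sum.elim z 0, ?_, heig⟩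
  obtain ⟨v⟩ := hconn.nonempty
  intro h
  have hv := congrFun h (Sum.inl v)
  by_cases hv₁ : v ∈ V₁ <;> simp_all

theorem stmt5 {V : Type*} [Fintype V] [DecidableEq V] (G : SimpleGraph V)
    [DecidableRel G.Adj] (r : ℕ) (hreg : G.IsRegularOfDegree r)
    (hconn : G.Connected)
    (V₁ : Set V) [DecidablePred (· ∈ V₁)]
    (hbip : ∀ a b, G.Adj a b → (a ∈ V₁ ↔ b ∉ V₁))
    (z : V → ℝ) (hz : ∀ u, z u = if u ∈ V₁ then 1 else -1) :
    QQ G r *ᵥ Sum.elim z (0 : G.edgeSet → ℝ) = (r : ℝ) • Sum.elim z (0 : G.edgeSet → ℝ) ∧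
    ∃ X : V ⊕ G.edgeSet → ℝ, X ≠ 0 ∧ QQ G r *ᵥ X = (r : ℝ) • X :=
  stmt5_general G r hconn V₁ hbip z hz
end

section
/- Let G be an r-regular finite simple graph with incidence matrix R and signless Laplacian Q_G = R·Rᵀ. Let q > 0 be real, let f be a real symmetric V×V matrix with f² = f and Q_G·f = q·f, let μ be a real root of (t+2−2r)(t−r) + (r−t−1)·q = 0, and set a = μ + 2 − 2r − q. Then the block matrix F = (1/(a²+q))·[[a²·f, a·f·R],[a·Rᵀ·f, Rᵀ·f·R]] indexed by V ⊕ E satisfies Fᵀ = F, F² = F, and M·F = μ·F, where M is the signless Laplacian of the Q-graph Q(G). -/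
/-!
`P = liftedBlock R f a = [[a²f, a fR], [a Rᵀf, Rᵀf R]]` factors as `[a f; Rᵀf] * [a f, f R]`.
Because `f² = f` and `R Rᵀ f = q f`, every product of two of its blocks collapses back to a
multiple of a block, giving `P * P = (a² + q) • P`, so `P / (a² + q)` is a symmetric idempotent.
The same collapse shows that the Q-graph signless Laplacian acts on `P` by `μ` as soon as
`a r + q = μ a` and `a + (2r - 2) + q = μ`; for `a = μ + 2 - 2r - q` the second holds trivially
and the first is exactly the quadratic equation satisfied by `μ`.
-/

open Matrix

namespace Matrix

section LiftedBlock

variable {m n 𝕜 : Type*} [Fintype m] [CommRing 𝕜]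

def liftedBlock (R : Matrix m n 𝕜) (f : Matrix m m 𝕜) (a : 𝕜) :
    Matrix (m ⊕ n) (m ⊕ n) 𝕜 :=
  fromBlocks (a ^ 2 • f) (a • (f * R)) (a • (Rᵀ * f)) (Rᵀ * f * R)

theorem liftedBlock_isSymm {R : Matrix m n 𝕜} {f : Matrix m m 𝕜} (hfs : f.IsSymm) (a : 𝕜) :
    (liftedBlock R f a).IsSymm := by
  simp only [IsSymm, liftedBlock, fromBlocks_transpose, transpose_smul, transpose_mul,
    transpose_transpose, hfs.eq, Matrix.mul_assoc]

variable [Fintype n] {R : Matrix m n 𝕜} {f : Matrix m m 𝕜} {q : 𝕜}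

theorem liftedBlock_mul_self (hfi : f * f = f) (hf : R * Rᵀ * f = q • f) (a : 𝕜) :
    liftedBlock R f a * liftedBlock R f a = (a ^ 2 + q) • liftedBlock R f a := by
  have hRf : R * (Rᵀ * f) = q • f := by rw [← Matrix.mul_assoc, hf]
  have hfR : f * (f * R) = f * R := by rw [← Matrix.mul_assoc, hfi]
  have hRfR : R * (Rᵀ * (f * R)) = q • (f * R) := by
    rw [← Matrix.mul_assoc, ← Matrix.mul_assoc, hf, Matrix.smul_mul]
  simp only [liftedBlock, fromBlocks_multiply, fromBlocks_smul, fromBlocks_inj]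
  refine ⟨?_, ?_, ?_, ?_⟩ <;>
  · simp only [Matrix.smul_mul, Matrix.mul_smul, Matrix.mul_assoc, smul_smul, hfi, hRf, hfR,
      hRfR]
    module

theorem fromBlocks_mul_liftedBlock [DecidableEq m] [DecidableEq n] (hf : R * Rᵀ * f = q • f)
    {a r s μ : 𝕜} (hr : a * r + q = μ * a) (hs : a + s + q = μ) :
    fromBlocks (r • 1) R Rᵀ (s • 1 + Rᵀ * R) * liftedBlock R f a =
      μ • liftedBlock R f a := by
  have hRf : R * (Rᵀ * f) = q • f := by rw [← Matrix.mul_assoc, hf]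
  have hRfR : R * (Rᵀ * (f * R)) = q • (f * R) := by
    rw [← Matrix.mul_assoc, ← Matrix.mul_assoc, hf, Matrix.smul_mul]
  simp only [liftedBlock, fromBlocks_multiply, fromBlocks_smul, fromBlocks_inj]
  refine ⟨?_, ?_, ?_, ?_⟩ <;>
    simp only [Matrix.smul_mul, Matrix.mul_smul, Matrix.one_mul, Matrix.add_mul,
      Matrix.mul_assoc, smul_smul, hRf, hRfR] <;>
    match_scalars
  · linear_combination a * hr
  · linear_combination hr
  · linear_combination a * hs
  · linear_combination hs

end LiftedBlock

end Matrix

theorem stmt6_general {V : Type*} [Fintype V] [DecidableEq V] (G : SimpleGraph V)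
    [DecidableRel G.Adj] (r : ℕ)
    (q : ℝ) (hq : 0 < q) (f : Matrix V V ℝ)
    (hfs : f.IsSymm) (hfi : f * f = f)
    (hf : incMat G * (incMat G)ᵀ * f = q • f)
    (μ : ℝ) (hμ : (μ + 2 - 2 * (r : ℝ)) * (μ - (r : ℝ)) + ((r : ℝ) - μ - 1) * q = 0)
    (a : ℝ) (ha : a = μ + 2 - 2 * (r : ℝ) - q)
    (F : Matrix (V ⊕ G.edgeSet) (V ⊕ G.edgeSet) ℝ)
    (hF : F = (a ^ 2 + q)⁻¹ •
      Matrix.fromBlocks (a ^ 2 • f) (a • (f * incMat G))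
        (a • ((incMat G)ᵀ * f)) ((incMat G)ᵀ * f * incMat G)) :
    F.IsSymm ∧ F * F = F ∧ QQ G r * F = μ • F := by
  change F = (a ^ 2 + q)⁻¹ • liftedBlock (incMat G) f a at hF
  have hnorm : a ^ 2 + q ≠ 0 := by positivity
  have hr : a * r + q = μ * a := by rw [ha]; linear_combination -hμ
  have hs : a + (2 * r - 2) + q = μ := by rw [ha]; ring
  subst hF
  refine ⟨(liftedBlock_isSymm hfs a).smul _, ?_, ?_⟩
  · rw [smul_mul_smul_comm, liftedBlock_mul_self hfi hf, smul_smul,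
      inv_mul_cancel_right₀ hnorm]
  · rw [QQ, Matrix.mul_smul, fromBlocks_mul_liftedBlock hf hr hs, smul_comm]

theorem stmt6 {V : Type*} [Fintype V] [DecidableEq V] (G : SimpleGraph V)
    [DecidableRel G.Adj] (r : ℕ) (hreg : G.IsRegularOfDegree r)
    (q : ℝ) (hq : 0 < q) (f : Matrix V V ℝ)
    (hfs : f.IsSymm) (hfi : f * f = f)
    (hf : incMat G * (incMat G)ᵀ * f = q • f)
    (μ : ℝ) (hμ : (μ + 2 - 2 * (r : ℝ)) * (μ - (r : ℝ)) + ((r : ℝ) - μ - 1) * q = 0)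
    (a : ℝ) (ha : a = μ + 2 - 2 * (r : ℝ) - q)
    (F : Matrix (V ⊕ G.edgeSet) (V ⊕ G.edgeSet) ℝ)
    (hF : F = (a ^ 2 + q)⁻¹ •
      Matrix.fromBlocks (a ^ 2 • f) (a • (f * incMat G))
        (a • ((incMat G)ᵀ * f)) ((incMat G)ᵀ * f * incMat G)) :
    F.IsSymm ∧ F * F = F ∧ QQ G r * F = μ • F :=
  stmt6_general G r q hq f hfs hfi hf μ hμ a ha F hF
end

section
/- Let G be a connected non-bipartite r-regular finite simple graph (r ≥ 2) with signless Laplacian spectral decomposition q_0 > q_1 > … > q_d with projections f_0, …, f_d (so every q_i > 0). For each i let μ_{i,±} = (3r+q_i−2 ± √((q_i+r−2)²+4q_i))/2, a_{i,±} = μ_{i,±}+2−2r−q_i, F_{i,±} = (1/(a_{i,±}²+q_i))·[[a_{i,±}²·f_i, a_{i,±}·f_i·R],[a_{i,±}·Rᵀ·f_i, Rᵀ·f_i·R]], and set F' = I_{V⊕E} − Σ_{i,±} F_{i,±}. Then the matrices F_{i,±} (over all indices i and both signs) together with F' are real symmetric idempotents, the product of any two distinct ones is zero, they sum to I_{V⊕E},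 and M = Σ_{i,±} μ_{i,±}·F_{i,±} + (2r−2)·F', where M is the signless Laplacian of the Q-graph Q(G). -/
open Matrix

/-!
Write `B` for the incidence matrix, so that `B Bᵀ f_i = q_i f_i`. With the column block
`C_{f,a} = [a f; Bᵀ f]`, one has `F_{i,±} = (a_{i,±}² + q_i)⁻¹ C Cᵀ` and
`C_{f,a}ᵀ C_{g,b} = (a b + q_g) f g`. The numbers `a_{i,±}` are the roots of
`x² + (q_i + r - 2) x - q_i`, so `a_{i,+} a_{i,-} = -q_i`: the two lifts of `f_i` are orthogonal,
and each is idempotent because `q_i > 0`. The latter holds since `Bᵀ y = 0` forces `y = 0` on a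
connected non-bipartite graph: `y` changes sign along every edge, so a nonzero `y` would give a
proper 2-colouring by sign. The spectral identity is a computation with the weights
`(a + q_i) / (a² + q_i)` of the two lifts, summed over `i` using `∑ f_i = 1`.
-/

section Positivity

variable {V : Type*} [Fintype V] [DecidableEq V] {G : SimpleGraph V}

lemma incMat_transpose_mulVec_apply_mk (y : V → ℝ) {u w : V} (h : G.Adj u w) :
    ((incMat G)ᵀ *ᵥ y) ⟨s(u, w), h⟩ = y u + y w := by
  simp only [mulVec, dotProduct, transpose_apply, incMat, of_apply, Sym2.mem_iff, ite_mul,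
    one_mul, zero_mul]
  rw [← Finset.sum_filter, show Finset.univ.filter (fun x => x = u ∨ x = w) = {u, w} by
    ext; simp, Finset.sum_pair h.ne]

lemma eq_zero_of_incMat_transpose_mulVec_eq_zero (hconn : G.Connected) (hnb : ¬ G.Colorable 2)
    {y : V → ℝ} (hy : (incMat G)ᵀ *ᵥ y = 0) : y = 0 := by
  have hadj : ∀ u w, G.Adj u w → y w = -y u := fun u w h => by
    have := incMat_transpose_mulVec_apply_mk y h
    rw [hy, Pi.zero_apply] at this
    linarith
  have hsq : ∀ u w, G.Reachable u w → y u ^ 2 = y w ^ 2 := by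
    rintro u w ⟨p⟩
    induction p with
    | nil => rfl
    | cons h _ ih => rw [← ih, hadj _ _ h, neg_sq]
  by_contra hne
  obtain ⟨v₀, hv₀⟩ := Function.ne_iff.mp hne
  have hnz : ∀ v, y v ≠ 0 := fun v h0 => hv₀ <| by
    simpa [h0] using hsq v₀ v (hconn.preconnected v₀ v)
  let c : G.Coloring Bool := SimpleGraph.Coloring.mk (fun v => decide (0 < y v)) fun {u w} h => by
    rw [hadj u w h]
    rcases (hnz u).lt_or_gt with hu | hu <;> simp [hu, hu.le]
  exact hnb (by simpa using c.colorable)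

lemma pos_of_incMat_mul_transpose_mul_eq_smul [DecidableRel G.Adj] (hconn : G.Connected)
    (hnb : ¬ G.Colorable 2) {f : Matrix V V ℝ} {q : ℝ} (hf : f ≠ 0)
    (h : incMat G * (incMat G)ᵀ * f = q • f) : 0 < q := by
  obtain ⟨v, w, hvw⟩ : ∃ v w, f v w ≠ 0 := by
    by_contra! h0
    exact hf (Matrix.ext h0)
  set y := f *ᵥ Pi.single w 1
  have hy : y ≠ 0 := fun h0 => hvw (by simpa [y, mulVec_single_one] using congrFun h0 v)
  have hz : (incMat G)ᵀ *ᵥ y ≠ 0 :=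
    fun h0 => hy (eq_zero_of_incMat_transpose_mulVec_eq_zero hconn hnb h0)
  have heig : (incMat G * (incMat G)ᵀ) *ᵥ y = q • y := by
    rw [mulVec_mulVec, h, smul_mulVec]
  have key : q * (y ⬝ᵥ y) = ((incMat G)ᵀ *ᵥ y) ⬝ᵥ ((incMat G)ᵀ *ᵥ y) := by
    rw [← smul_eq_mul, ← dotProduct_smul, ← heig, ← mulVec_mulVec, dotProduct_mulVec,
      ← mulVec_transpose]
  have hy₀ : 0 < y ⬝ᵥ y := by simpa using dotProduct_star_self_pos_iff.mpr hy
  have hz₀ : 0 < ((incMat G)ᵀ *ᵥ y) ⬝ᵥ ((incMat G)ᵀ *ᵥ y) := by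
    simpa using dotProduct_star_self_pos_iff.mpr hz
  exact pos_of_mul_pos_left (key ▸ hz₀) hy₀.le

end Positivity

lemma Matrix.fromBlocks_sum {ι l m n o α : Type*} [AddCommMonoid α] (s : Finset ι)
    (A : ι → Matrix n l α) (B : ι → Matrix n m α) (C : ι → Matrix o l α)
    (D : ι → Matrix o m α) :
    ∑ i ∈ s, fromBlocks (A i) (B i) (C i) (D i) =
      fromBlocks (∑ i ∈ s, A i) (∑ i ∈ s, B i) (∑ i ∈ s, C i) (∑ i ∈ s, D i) := by
  ext (x | x) (y | y) <;> simp [Matrix.sum_apply]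

lemma OrthogonalIdempotents.sum_smul_mul {R 𝕜 ι : Type*} [Semiring R] [Fintype ι]
    [Semiring 𝕜] [Module 𝕜 R] [IsScalarTower 𝕜 R R] {e : ι → R} (he : OrthogonalIdempotents e)
    (c : ι → 𝕜) (j : ι) : (∑ i, c i • e i) * e j = c j • e j := by
  classical
  simp [Finset.sum_mul, smul_mul_assoc, he.mul_eq]

section Lift

variable {V E : Type*} [Fintype V] (B : Matrix V E ℝ) {f g : Matrix V V ℝ}

/-- For `f = f_i`, `q = q_i` and `a = a_{i,±}` this is the matrix `F_{i,±}` of the statement. -/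
noncomputable def liftProj (f : Matrix V V ℝ) (q a : ℝ) : Matrix (V ⊕ E) (V ⊕ E) ℝ :=
  (a ^ 2 + q)⁻¹ • fromBlocks (a ^ 2 • f) (a • (f * B)) (a • (Bᵀ * f)) (Bᵀ * f * B)

noncomputable def liftCol (f : Matrix V V ℝ) (a : ℝ) : Matrix (V ⊕ E) V ℝ :=
  fromRows (a • f) (Bᵀ * f)

@[simp]
lemma liftCol_zero (a : ℝ) : liftCol B 0 a = 0 := by
  simp [liftCol, fromRows_zero]

lemma liftCol_mul (a : ℝ) : liftCol B f a * g = liftCol B (f * g) a := by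
  simp only [liftCol, fromRows_mul, smul_mul, Matrix.mul_assoc]

lemma liftCol_mul_transpose_liftCol (hf : f.IsSymm) (hff : f * f = f) (a : ℝ) :
    liftCol B f a * (liftCol B f a)ᵀ =
      fromBlocks (a ^ 2 • f) (a • (f * B)) (a • (Bᵀ * f)) (Bᵀ * f * B) := by
  have hff' : f * (f * B) = f * B := by rw [← Matrix.mul_assoc, hff]
  rw [liftCol, transpose_fromRows, fromRows_mul_fromCols, transpose_smul, transpose_mul,
    transpose_transpose, hf.eq]
  simp only [Matrix.smul_mul, Matrix.mul_smul, smul_smul, Matrix.mul_assoc, hff, hff', sq]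

lemma liftProj_eq_smul_liftCol_mul_transpose (hf : f.IsSymm) (hff : f * f = f)
    (q a : ℝ) : liftProj B f q a = (a ^ 2 + q)⁻¹ • (liftCol B f a * (liftCol B f a)ᵀ) := by
  rw [liftProj, liftCol_mul_transpose_liftCol B hf hff]

@[simp]
lemma liftProj_zero (q a : ℝ) : liftProj B 0 q a = 0 := by
  simp [liftProj, fromBlocks_zero]

lemma isSymm_liftProj (hf : f.IsSymm) (q a : ℝ) : (liftProj B f q a).IsSymm := by
  simp only [IsSymm, liftProj, transpose_smul, fromBlocks_transpose, transpose_mul, hf.eq,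
    transpose_transpose, Matrix.mul_assoc]

lemma smul_liftProj_add_smul_liftProj {q a b : ℝ} (hq : 0 < q) (hab : a * b = -q) :
    (a + q) • liftProj B f q a + (b + q) • liftProj B f q b =
      fromBlocks ((a + b + q) • f) (f * B) (Bᵀ * f) (Bᵀ * f * B) := by
  have ha : a ≠ 0 := by rintro rfl; linarith
  have hb : b ≠ 0 := by rintro rfl; linarith
  have hab₀ : a - b ≠ 0 := by
    intro h
    obtain rfl : b = a := by linarith
    nlinarith [sq_nonneg b]
  have hba₀ : b - a ≠ 0 := by rwa [← neg_sub, neg_ne_zero]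
  have hA : a ^ 2 + q = a * (a - b) := by linear_combination hab
  have hB : b ^ 2 + q = b * (b - a) := by linear_combination hab
  have hq' : q = -(a * b) := by linarith
  obtain ⟨h₁, h₂, h₃⟩ :
      (a + q) * ((a ^ 2 + q)⁻¹ * a ^ 2) + (b + q) * ((b ^ 2 + q)⁻¹ * b ^ 2) = a + b + q ∧
      (a + q) * ((a ^ 2 + q)⁻¹ * a) + (b + q) * ((b ^ 2 + q)⁻¹ * b) = 1 ∧
      (a + q) * (a ^ 2 + q)⁻¹ + (b + q) * (b ^ 2 + q)⁻¹ = 1 := by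
    refine ⟨?_, ?_, ?_⟩ <;> rw [hA, hB, hq'] <;> field_simp <;> ring
  simp only [liftProj, smul_smul, fromBlocks_smul, fromBlocks_add, ← add_smul, h₁, h₂, h₃, one_smul]

variable [Fintype E]

lemma transpose_liftCol_mul_liftCol {q : ℝ} (hf : f.IsSymm)
    (hg : B * Bᵀ * g = q • g) (a b : ℝ) :
    (liftCol B f a)ᵀ * liftCol B g b = (a * b + q) • (f * g) := by
  rw [liftCol, liftCol, transpose_fromRows, fromCols_mul_fromRows, transpose_smul, transpose_mul,
    transpose_transpose, hf.eq, Matrix.mul_assoc f, ← Matrix.mul_assoc B, hg]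
  simp only [Matrix.smul_mul, Matrix.mul_smul, smul_smul]
  module

lemma liftProj_mul_liftProj {q q' : ℝ} (hf : f.IsSymm) (hff : f * f = f)
    (hg : g.IsSymm) (hgg : g * g = g) (hgQ : B * Bᵀ * g = q' • g) (a b : ℝ) :
    liftProj B f q a * liftProj B g q' b =
      ((a ^ 2 + q)⁻¹ * (b ^ 2 + q')⁻¹ * (a * b + q')) •
        (liftCol B (f * g) a * (liftCol B g b)ᵀ) := by
  rw [liftProj_eq_smul_liftCol_mul_transpose B hf hff,
    liftProj_eq_smul_liftCol_mul_transpose B hg hgg,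
    smul_mul_smul, Matrix.mul_assoc, ← Matrix.mul_assoc (liftCol B f a)ᵀ,
    transpose_liftCol_mul_liftCol B hf hgQ]
  simp only [Matrix.smul_mul, Matrix.mul_smul, smul_smul, ← Matrix.mul_assoc, liftCol_mul, hff]

lemma isIdempotentElem_liftProj {q : ℝ} (hf : f.IsSymm) (hff : f * f = f)
    (hfQ : B * Bᵀ * f = q • f) {a : ℝ} (ha : a ^ 2 + q ≠ 0) :
    IsIdempotentElem (liftProj B f q a) := by
  rw [IsIdempotentElem, liftProj_mul_liftProj B hf hff hf hff hfQ, hff,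
    liftProj_eq_smul_liftCol_mul_transpose B hf hff]
  congr 1
  field_simp

lemma liftProj_mul_liftProj_of_mul_eq_zero {q q' : ℝ} (hf : f.IsSymm)
    (hff : f * f = f) (hg : g.IsSymm) (hgg : g * g = g) (hgQ : B * Bᵀ * g = q' • g)
    (hfg : f * g = 0) (a b : ℝ) : liftProj B f q a * liftProj B g q' b = 0 := by
  rw [liftProj_mul_liftProj B hf hff hg hgg hgQ, hfg, liftCol_zero, Matrix.zero_mul, smul_zero]

lemma liftProj_mul_liftProj_of_mul_add_eq_zero {q : ℝ} (hf : f.IsSymm) (hff : f * f = f)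
    (hfQ : B * Bᵀ * f = q • f) {a b : ℝ} (hab : a * b + q = 0) :
    liftProj B f q a * liftProj B f q b = 0 := by
  rw [liftProj_mul_liftProj B hf hff hf hff hfQ, hab, mul_zero, zero_smul]

end Lift

section Family

variable {V E ι : Type*} [Fintype V] [DecidableEq V] (B : Matrix V E ℝ) {f : ι → Matrix V V ℝ}
  {q : ι → ℝ} (a : ι → Bool → ℝ)

lemma orthogonalIdempotents_liftProj [Fintype E] [DecidableEq E] (hf : OrthogonalIdempotents f)
    (hfs : ∀ i, (f i).IsSymm) (hfQ : ∀ i, B * Bᵀ * f i = q i • f i)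
    (hroots : ∀ i, f i ≠ 0 → 0 < q i ∧ a i true * a i false = -q i) :
    OrthogonalIdempotents fun x : ι × Bool => liftProj B (f x.1) (q x.1) (a x.1 x.2) := by
  refine ⟨fun ⟨i, s⟩ => ?_, fun ⟨i, s⟩ ⟨j, t⟩ hne => ?_⟩
  · rcases eq_or_ne (f i) 0 with h0 | h0
    · simp only [h0, liftProj_zero]
      exact IsIdempotentElem.zero
    · have hq := (hroots i h0).1
      exact isIdempotentElem_liftProj B (hfs i) (hf.idem i).eq (hfQ i) (by positivity)
  · rcases eq_or_ne i j with rfl | hij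
    · rcases eq_or_ne (f i) 0 with h0 | h0
      · simp [h0]
      · obtain rfl : t = !s := by cases s <;> cases t <;> simp_all
        have hab := (hroots i h0).2
        refine liftProj_mul_liftProj_of_mul_add_eq_zero B (hfs i) (hf.idem i).eq (hfQ i) ?_
        cases s <;> simp only [Bool.not_true, Bool.not_false] <;>
          linarith [mul_comm (a i true) (a i false)]
    · exact liftProj_mul_liftProj_of_mul_eq_zero B (hfs i) (hf.idem i).eq (hfs j) (hf.idem j).eq
        (hfQ j) (hf.ortho hij) _ _

lemma sum_sum_smul_liftProj [Fintype ι] (hfsum : ∑ i, f i = 1) {c : ℝ}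
    (hroots : ∀ i, f i ≠ 0 → 0 < q i ∧ a i true * a i false = -q i)
    (hsum : ∀ i, a i true + a i false + q i = c) :
    ∑ i, ∑ s, (a i s + q i) • liftProj B (f i) (q i) (a i s) =
      fromBlocks (c • 1) B Bᵀ (Bᵀ * B) := by
  have hpair : ∀ i, ∑ s, (a i s + q i) • liftProj B (f i) (q i) (a i s) =
      fromBlocks (c • f i) (f i * B) (Bᵀ * f i) (Bᵀ * f i * B) := by
    intro i
    rcases eq_or_ne (f i) 0 with h0 | h0
    · simp [h0, fromBlocks_zero]
    · rw [Fintype.sum_bool, smul_liftProj_add_smul_liftProj B (hroots i h0).1 (hroots i h0).2, hsum]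
  simp only [hpair, fromBlocks_sum, ← Finset.smul_sum, ← Matrix.sum_mul, ← Matrix.mul_sum, hfsum,
    Matrix.one_mul, Matrix.mul_one]

end Family

lemma QQ_eq_fromBlocks_add_smul_one {V : Type*} [Fintype V] [DecidableEq V] (G : SimpleGraph V)
    (r : ℕ) : QQ G r =
      fromBlocks ((2 - r : ℝ) • 1) (incMat G) (incMat G)ᵀ ((incMat G)ᵀ * incMat G) +
        (2 * (r : ℝ) - 2) • 1 := by
  rw [QQ, ← fromBlocks_one, fromBlocks_smul, fromBlocks_add]
  simp only [smul_zero, add_zero, ← add_smul, add_comm ((incMat G)ᵀ * incMat G)]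
  ring_nf

theorem stmt7_general {V : Type*} [Fintype V] [DecidableEq V] (G : SimpleGraph V)
    [DecidableRel G.Adj] (r : ℕ) (hconn : G.Connected) (hnb : ¬ G.Colorable 2)
    (d : ℕ) (q : Fin (d + 1) → ℝ) (f : Fin (d + 1) → Matrix V V ℝ)
    (hfs : ∀ i, (f i).IsSymm) (hfi : ∀ i, f i * f i = f i)
    (hfo : ∀ i j, i ≠ j → f i * f j = 0) (hfsum : ∑ i, f i = 1)
    (hQ : incMat G * (incMat G)ᵀ = ∑ i, q i • f i)
    (μ : Fin (d + 1) → Bool → ℝ)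
    (hμ : ∀ i s, μ i s = (3 * (r : ℝ) + q i - 2 +
      (if s then 1 else -1) * Real.sqrt ((q i + (r : ℝ) - 2) ^ 2 + 4 * q i)) / 2)
    (a : Fin (d + 1) → Bool → ℝ) (ha : ∀ i s, a i s = μ i s + 2 - 2 * (r : ℝ) - q i)
    (F : Fin (d + 1) → Bool → Matrix (V ⊕ G.edgeSet) (V ⊕ G.edgeSet) ℝ)
    (hF : ∀ i s, F i s = ((a i s) ^ 2 + q i)⁻¹ •
      Matrix.fromBlocks ((a i s) ^ 2 • f i) (a i s • (f i * incMat G))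
        (a i s • ((incMat G)ᵀ * f i)) ((incMat G)ᵀ * f i * incMat G))
    (F' : Matrix (V ⊕ G.edgeSet) (V ⊕ G.edgeSet) ℝ)
    (hF' : F' = 1 - ∑ i, ∑ s, F i s) :
    (∀ i s, (F i s).IsSymm ∧ F i s * F i s = F i s) ∧
    (F'.IsSymm ∧ F' * F' = F') ∧
    (∀ i s j t, (i, s) ≠ (j, t) → F i s * F j t = 0) ∧
    (∀ i s, F i s * F' = 0 ∧ F' * F i s = 0) ∧
    ((∑ i, ∑ s, F i s) + F' = 1) ∧
    QQ G r = (∑ i, ∑ s, μ i s • F i s) + (2 * (r : ℝ) - 2) • F' := by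
  set B := incMat G
  have hf : OrthogonalIdempotents f := ⟨hfi, fun i j h => hfo i j h⟩
  have hfQ : ∀ i, B * Bᵀ * f i = q i • f i := fun i => by rw [hQ, hf.sum_smul_mul]
  have hroots : ∀ i, f i ≠ 0 → 0 < q i ∧ a i true * a i false = -q i := fun i hi => by
    have hq := pos_of_incMat_mul_transpose_mul_eq_smul hconn hnb hi (hfQ i)
    have hD := Real.sq_sqrt (by nlinarith : 0 ≤ (q i + (r : ℝ) - 2) ^ 2 + 4 * q i)
    refine ⟨hq, ?_⟩
    simp only [ha, hμ, if_true, Bool.false_eq_true, if_false]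
    linear_combination (-1 / 4 : ℝ) * hD
  have hsum : ∀ i, a i true + a i false + q i = 2 - r := fun i => by
    simp only [ha, hμ, if_true, Bool.false_eq_true, if_false]; ring
  have hμa : ∀ i s, μ i s = (a i s + q i) + (2 * r - 2) := fun i s => by rw [ha]; ring
  obtain rfl : F = fun i s => liftProj B (f i) (q i) (a i s) := funext₂ hF
  have hE := orthogonalIdempotents_liftProj B a hf hfs hfQ hroots
  have hE' := CompleteOrthogonalIdempotents.option hE
  rw [← Fintype.sum_prod_type'] at hF'
  subst hF'
  beta_reduce
  refine ⟨fun i s => ⟨?_, ?_⟩, ⟨?_, ?_⟩, fun i s j t h => ?_, fun i s => ⟨?_, ?_⟩, ?_, ?_⟩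
  · exact isSymm_liftProj B (hfs i) _ _
  · exact hE.idem (i, s)
  · exact isSymm_one.sub (Finset.sum_induction _ IsSymm (fun _ _ => IsSymm.add) isSymm_zero
      fun x _ => isSymm_liftProj B (hfs x.1) _ _)
  · exact hE'.idem none
  · exact hE.ortho (i := (i, s)) (j := (j, t)) h
  · exact hE'.ortho (Option.some_ne_none (i, s))
  · exact hE'.ortho (Option.some_ne_none (i, s)).symm
  · rw [Fintype.sum_prod_type, add_sub_cancel]
  · rw [QQ_eq_fromBlocks_add_smul_one, ← sum_sum_smul_liftProj B a hfsum hroots hsum,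
      Fintype.sum_prod_type]
    simp only [hμa, add_smul, Finset.sum_add_distrib, ← Finset.smul_sum, smul_sub]
    abel

theorem stmt7 {V : Type*} [Fintype V] [DecidableEq V] (G : SimpleGraph V)
    [DecidableRel G.Adj] (r : ℕ) (hr : 2 ≤ r) (hreg : G.IsRegularOfDegree r)
    (hconn : G.Connected) (hnb : ¬ G.Colorable 2)
    (d : ℕ) (q : Fin (d + 1) → ℝ) (f : Fin (d + 1) → Matrix V V ℝ)
    (hqa : StrictAnti q)
    (hfs : ∀ i, (f i).IsSymm) (hfi : ∀ i, f i * f i = f i)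
    (hfo : ∀ i j, i ≠ j → f i * f j = 0) (hfsum : ∑ i, f i = 1)
    (hQ : incMat G * (incMat G)ᵀ = ∑ i, q i • f i)
    (μ : Fin (d + 1) → Bool → ℝ)
    (hμ : ∀ i s, μ i s = (3 * (r : ℝ) + q i - 2 +
      (if s then 1 else -1) * Real.sqrt ((q i + (r : ℝ) - 2) ^ 2 + 4 * q i)) / 2)
    (a : Fin (d + 1) → Bool → ℝ) (ha : ∀ i s, a i s = μ i s + 2 - 2 * (r : ℝ) - q i)
    (F : Fin (d + 1) → Bool → Matrix (V ⊕ G.edgeSet) (V ⊕ G.edgeSet) ℝ)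
    (hF : ∀ i s, F i s = ((a i s) ^ 2 + q i)⁻¹ •
      Matrix.fromBlocks ((a i s) ^ 2 • f i) (a i s • (f i * incMat G))
        (a i s • ((incMat G)ᵀ * f i)) ((incMat G)ᵀ * f i * incMat G))
    (F' : Matrix (V ⊕ G.edgeSet) (V ⊕ G.edgeSet) ℝ)
    (hF' : F' = 1 - ∑ i, ∑ s, F i s) :
    (∀ i s, (F i s).IsSymm ∧ F i s * F i s = F i s) ∧
    (F'.IsSymm ∧ F' * F' = F') ∧
    (∀ i s j t, (i, s) ≠ (j, t) → F i s * F j t = 0) ∧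
    (∀ i s, F i s * F' = 0 ∧ F' * F i s = 0) ∧
    ((∑ i, ∑ s, F i s) + F' = 1) ∧
    QQ G r = (∑ i, ∑ s, μ i s • F i s) + (2 * (r : ℝ) - 2) • F' :=
  stmt7_general G r hconn hnb d q f hfs hfi hfo hfsum hQ μ hμ a ha F hF F' hF'
end

section
/- Let G be a connected bipartite r-regular finite simple graph with r ≥ 2 and signless Laplacian spectral decomposition q_0 > q_1 > … > q_d with projections f_0, …, f_d (so q_0 = 2r and q_d = 0). Then for every edge e ∈ E there exists an index i ∈ {1, …, d−1} such that f_i·(R·e_e) ≠ 0, where R·e_e ∈ ℝ^V is the column of the incidence matrix R indexed by e. -/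
open Matrix

/-!
Let `x` be the column of `R` at the edge `ab`, and let `c ≠ b` be a second neighbour of `a`
(it exists since `r ≥ 2`). Both `Q = R Rᵀ` and `L = 2r·I - Q` (the Laplacian) are positive
semidefinite, and the all-ones vector and the `±1` vector of a 2-colouring are eigenvectors for
`2r` and `0`; hence `q₀ ≥ 2r` and `q_d ≤ 0`. An eigenvector of `Q` for such an extreme eigenvalue
lies in the kernel of `L`, so it is constant across edges, or in the kernel of `Rᵀ`, so it changes
sign across edges; either way it takes the same value at the two neighbours `b` and `c` of `a`.
If every middle component `fᵢ x` vanished, `x = f₀ x + f_d x` would give `x b = x c`, whereas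
`x b = 1` and `x c = 0`.
-/

namespace Matrix

theorem PosSemidef.mulVec_eq_zero_of_mulVec_eq_smul_of_nonpos {n : Type*} [Fintype n]
    {M : Matrix n n ℝ} (hM : M.PosSemidef) {y : n → ℝ} {μ : ℝ} (hy : M *ᵥ y = μ • y)
    (hμ : μ ≤ 0) : M *ᵥ y = 0 := by
  rw [← hM.dotProduct_mulVec_zero_iff, star_trivial]
  have hnonneg := hM.dotProduct_mulVec_nonneg y
  have hyy := dotProduct_self_star_nonneg y
  rw [star_trivial] at hnonneg hyy
  rw [hy, dotProduct_smul, smul_eq_mul] at hnonneg ⊢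
  exact le_antisymm (mul_nonpos_of_nonpos_of_nonneg hμ hyy) hnonneg

theorem transpose_mulVec_eq_zero_of_mul_transpose_mulVec_eq_zero {m k : Type*} [Fintype m]
    [Fintype k] {A : Matrix m k ℝ} {y : m → ℝ} (h : (A * Aᵀ) *ᵥ y = 0) : Aᵀ *ᵥ y = 0 := by
  rw [← dotProduct_self_eq_zero, mulVec_transpose, ← dotProduct_mulVec, ← mulVec_transpose,
    mulVec_mulVec, h, dotProduct_zero]

variable {n ι : Type*} [Fintype n] [DecidableEq n] [Fintype ι]

structure IsSpectralDecomposition (M : Matrix n n ℝ) (q : ι → ℝ) (f : ι → Matrix n n ℝ) :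
    Prop where
  mul_self : ∀ i, f i * f i = f i
  mul_eq_zero : ∀ i j, i ≠ j → f i * f j = 0
  sum_eq_one : ∑ i, f i = 1
  eq_sum_smul : M = ∑ i, q i • f i

namespace IsSpectralDecomposition

variable {M : Matrix n n ℝ} {q : ι → ℝ} {f : ι → Matrix n n ℝ}

theorem mul_proj (h : IsSpectralDecomposition M q f) (i : ι) : M * f i = q i • f i := by
  classical
  rw [h.eq_sum_smul, Finset.sum_mul, Finset.sum_eq_single i
    (fun j _ hj => by rw [smul_mul_assoc, h.mul_eq_zero j i hj, smul_zero]) (by simp),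
    smul_mul_assoc, h.mul_self]

theorem proj_mul (h : IsSpectralDecomposition M q f) (i : ι) : f i * M = q i • f i := by
  classical
  rw [h.eq_sum_smul, Finset.mul_sum, Finset.sum_eq_single i
    (fun j _ hj => by rw [mul_smul_comm, h.mul_eq_zero i j hj.symm, smul_zero]) (by simp),
    mul_smul_comm, h.mul_self]

theorem sum_proj_mulVec (h : IsSpectralDecomposition M q f) (y : n → ℝ) :
    ∑ i, f i *ᵥ y = y := by
  rw [← sum_mulVec, h.sum_eq_one, one_mulVec]

theorem apply_eq_apply_of_forall_proj (h : IsSpectralDecomposition M q f) {y : n → ℝ}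
    {u v : n} (hy : ∀ i, (f i *ᵥ y) u = (f i *ᵥ y) v) : y u = y v := calc
  y u = ∑ i, (f i *ᵥ y) u := by rw [← Finset.sum_apply, h.sum_proj_mulVec]
  _ = ∑ i, (f i *ᵥ y) v := Finset.sum_congr rfl fun i _ => hy i
  _ = y v := by rw [← Finset.sum_apply, h.sum_proj_mulVec]

theorem mulVec_proj_mulVec (h : IsSpectralDecomposition M q f) (i : ι) (y : n → ℝ) :
    M *ᵥ (f i *ᵥ y) = q i • (f i *ᵥ y) := by
  rw [mulVec_mulVec, h.mul_proj, smul_mulVec]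

theorem proj_mulVec_eq_zero_of_ne (h : IsSpectralDecomposition M q f) {y : n → ℝ} {μ : ℝ}
    (hy : M *ᵥ y = μ • y) {i : ι} (hi : q i ≠ μ) : f i *ᵥ y = 0 := by
  have : q i • (f i *ᵥ y) = μ • (f i *ᵥ y) := by
    rw [← smul_mulVec, ← h.proj_mul, ← mulVec_mulVec, hy, mulVec_smul]
  by_contra hne
  exact hi (smul_left_injective ℝ hne this)

theorem exists_eq_of_mulVec_eq_smul (h : IsSpectralDecomposition M q f) {y : n → ℝ} {μ : ℝ}
    (hy0 : y ≠ 0) (hy : M *ᵥ y = μ • y) : ∃ i, q i = μ := by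
  by_contra! hμ
  refine hy0 ?_
  rw [← h.sum_proj_mulVec y]
  exact Finset.sum_eq_zero fun i _ => h.proj_mulVec_eq_zero_of_ne hy (hμ i)

end IsSpectralDecomposition

end Matrix

theorem SimpleGraph.IsRegularOfDegree.exists_adj_ne {V : Type*} [Fintype V]
    {G : SimpleGraph V} [DecidableRel G.Adj] {r : ℕ} (hreg : G.IsRegularOfDegree r)
    (hr : 2 ≤ r) (a b : V) : ∃ c, G.Adj a c ∧ c ≠ b := by
  obtain ⟨c, hc, hcb⟩ := Finset.exists_mem_ne
    (by rw [G.card_neighborFinset_eq_degree, hreg a]; omega : 1 < (G.neighborFinset a).card) b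
  exact ⟨c, (G.mem_neighborFinset a c).1 hc, hcb⟩

section incMat

variable {V : Type*} [Fintype V] [DecidableEq V] {G : SimpleGraph V}

theorem transpose_incMat_mulVec_apply_mk (y : V → ℝ) {u v : V} (h : s(u, v) ∈ G.edgeSet) :
    ((incMat G)ᵀ *ᵥ y) ⟨s(u, v), h⟩ = y u + y v := by
  have huv : u ≠ v := G.ne_of_adj h
  simp [incMat, mulVec, dotProduct, Finset.sum_ite, Finset.filter_or,
    Finset.filter_eq', Finset.sum_pair huv]

theorem transpose_incMat_mulVec_eq_zero_iff {y : V → ℝ} :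
    (incMat G)ᵀ *ᵥ y = 0 ↔ ∀ u v, G.Adj u v → y u + y v = 0 := by
  refine ⟨fun h u v huv => ?_, fun h => funext fun ⟨e, he⟩ => ?_⟩
  · rw [← transpose_incMat_mulVec_apply_mk y huv, h, Pi.zero_apply]
  · induction e using Sym2.ind with
    | _ u v => exact (transpose_incMat_mulVec_apply_mk y he).trans (h u v he)

variable [DecidableRel G.Adj]

theorem posSemidef_incMat_mul_transpose : (incMat G * (incMat G)ᵀ).PosSemidef := by
  simpa using posSemidef_self_mul_conjTranspose (incMat G)

theorem incMat_apply_eq_incMatrix (v : V) (e : G.edgeSet) :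
    incMat G v e = G.incMatrix ℝ v e := by
  simp [incMat, SimpleGraph.incMatrix_apply, Set.indicator_apply, SimpleGraph.incidenceSet]

theorem incMat_mul_transpose : incMat G * (incMat G)ᵀ = G.degMatrix ℝ + G.adjMatrix ℝ := by
  have hsum : incMat G * (incMat G)ᵀ = G.incMatrix ℝ * (G.incMatrix ℝ)ᵀ := by
    ext v w
    simp only [mul_apply, transpose_apply, incMat_apply_eq_incMatrix]
    rw [Finset.sum_set_coe (f := fun e => G.incMatrix ℝ v e * G.incMatrix ℝ w e)]
    refine Finset.sum_subset (Finset.subset_univ _) fun e _ he => ?_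
    rw [G.incMatrix_of_notMem_incidenceSet fun h => he ?_, zero_mul]
    exact Set.mem_toFinset.2 (G.incidenceSet_subset v h)
  rw [hsum, SimpleGraph.incMatrix_mul_transpose]
  ext v w
  by_cases h : v = w
  · subst h; simp [SimpleGraph.degMatrix]
  · simp [SimpleGraph.degMatrix, h]

theorem incMat_mul_transpose_mulVec_const {r : ℕ} (hreg : G.IsRegularOfDegree r) :
    (incMat G * (incMat G)ᵀ) *ᵥ (fun _ => 1) = (2 * r : ℝ) • fun _ => 1 := by
  ext v
  simp [incMat_mul_transpose, add_mulVec, SimpleGraph.degMatrix_mulVec_apply,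
    SimpleGraph.adjMatrix_mulVec_apply, hreg v]
  ring

theorem lapMatrix_add_incMat_mul_transpose {r : ℕ} (hreg : G.IsRegularOfDegree r) :
    G.lapMatrix ℝ + incMat G * (incMat G)ᵀ = (2 * r : ℝ) • 1 := by
  ext v w
  by_cases h : v = w
  · subst h
    simp [SimpleGraph.lapMatrix, incMat_mul_transpose, SimpleGraph.degMatrix, hreg v]
    ring
  · simp [SimpleGraph.lapMatrix, incMat_mul_transpose, SimpleGraph.degMatrix, h]

theorem exists_ne_zero_mulVec_eq_zero_of_colorable_two [Nonempty V] (hbip : G.Colorable 2) :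
    ∃ y ≠ 0, (incMat G * (incMat G)ᵀ) *ᵥ y = 0 := by
  obtain ⟨C⟩ := hbip
  refine ⟨fun v => (-1) ^ (C v : ℕ), fun h => ?_, ?_⟩
  · have := congrFun h (Classical.arbitrary V)
    simp at this
  · rw [← mulVec_mulVec, transpose_incMat_mulVec_eq_zero_iff.2, mulVec_zero]
    intro u v huv
    have := C.valid huv
    generalize C u = i, C v = j at this
    fin_cases i <;> fin_cases j <;> simp_all

variable {y : V → ℝ} {μ : ℝ}

theorem add_eq_zero_of_adj_of_mulVec_eq_smul_of_nonpos
    (hy : (incMat G * (incMat G)ᵀ) *ᵥ y = μ • y) (hμ : μ ≤ 0) {u v : V} (huv : G.Adj u v) :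
    y u + y v = 0 := by
  have hQy := posSemidef_incMat_mul_transpose.mulVec_eq_zero_of_mulVec_eq_smul_of_nonpos hy hμ
  exact transpose_incMat_mulVec_eq_zero_iff.1
    (transpose_mulVec_eq_zero_of_mul_transpose_mulVec_eq_zero hQy) u v huv

theorem eq_of_adj_of_mulVec_eq_smul_of_le {r : ℕ} (hreg : G.IsRegularOfDegree r)
    (hy : (incMat G * (incMat G)ᵀ) *ᵥ y = μ • y) (hμ : 2 * r ≤ μ) {u v : V} (huv : G.Adj u v) :
    y u = y v := by
  have hLy : G.lapMatrix ℝ *ᵥ y = (2 * r - μ) • y := by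
    rw [eq_sub_of_add_eq (lapMatrix_add_incMat_mul_transpose hreg), sub_mulVec, hy, smul_mulVec,
      one_mulVec, sub_smul]
  have hLy0 := (SimpleGraph.posSemidef_lapMatrix ℝ G).mulVec_eq_zero_of_mulVec_eq_smul_of_nonpos
    hLy (by linarith)
  exact (G.lapMatrix_mulVec_eq_zero_iff_forall_adj).1 hLy0 u v huv

theorem eq_of_adj_of_adj_of_mulVec_eq_smul {r : ℕ} (hreg : G.IsRegularOfDegree r)
    (hy : (incMat G * (incMat G)ᵀ) *ᵥ y = μ • y) (hμ : μ ≤ 0 ∨ 2 * r ≤ μ) {a b c : V}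
    (hab : G.Adj a b) (hac : G.Adj a c) : y b = y c := by
  rcases hμ with hμ | hμ
  · linarith [add_eq_zero_of_adj_of_mulVec_eq_smul_of_nonpos hy hμ hab,
      add_eq_zero_of_adj_of_mulVec_eq_smul_of_nonpos hy hμ hac]
  · rw [← eq_of_adj_of_mulVec_eq_smul_of_le hreg hy hμ hab,
      eq_of_adj_of_mulVec_eq_smul_of_le hreg hy hμ hac]

end incMat

theorem stmt11_general {V : Type*} [Fintype V] [DecidableEq V] (G : SimpleGraph V)
    [DecidableRel G.Adj] (r : ℕ) (hr : 2 ≤ r) (hreg : G.IsRegularOfDegree r)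
    (hbip : G.Colorable 2)
    (d : ℕ) (q : Fin (d + 1) → ℝ) (f : Fin (d + 1) → Matrix V V ℝ)
    (hqa : StrictAnti q)
    (hfi : ∀ i, f i * f i = f i)
    (hfo : ∀ i j, i ≠ j → f i * f j = 0) (hfsum : ∑ i, f i = 1)
    (hQ : incMat G * (incMat G)ᵀ = ∑ i, q i • f i) :
    ∀ e : G.edgeSet, ∃ i : Fin (d + 1), i ≠ 0 ∧ i ≠ Fin.last d ∧
      f i *ᵥ (fun v => incMat G v e) ≠ 0 := by
  rintro ⟨e, he⟩
  induction e using Sym2.ind with | _ a b => ?_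
  have : Nonempty V := ⟨a⟩
  have hspec : IsSpectralDecomposition (incMat G * (incMat G)ᵀ) q f := ⟨hfi, hfo, hfsum, hQ⟩
  obtain ⟨iTop, hiTop⟩ := hspec.exists_eq_of_mulVec_eq_smul (by simp [funext_iff])
    (incMat_mul_transpose_mulVec_const hreg)
  obtain ⟨y, hy0, hy⟩ := exists_ne_zero_mulVec_eq_zero_of_colorable_two hbip
  obtain ⟨iBot, hiBot⟩ := hspec.exists_eq_of_mulVec_eq_smul hy0 (by rw [hy, zero_smul])
  obtain ⟨c, hac, hcb⟩ := hreg.exists_adj_ne hr a b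
  by_contra! hmid
  set x : V → ℝ := fun v => incMat G v ⟨s(a, b), he⟩
  have hxbc : x b = x c := hspec.apply_eq_apply_of_forall_proj fun i => by
    by_cases hext : i = 0 ∨ i = Fin.last d
    · refine eq_of_adj_of_adj_of_mulVec_eq_smul hreg (hspec.mulVec_proj_mulVec i x) ?_ he hac
      rcases hext with rfl | rfl
      · exact Or.inr (hiTop ▸ hqa.antitone (Fin.zero_le iTop))
      · exact Or.inl (hiBot ▸ hqa.antitone (Fin.le_last iBot))
    · obtain ⟨h0, hl⟩ := not_or.1 hext
      rw [hmid i h0 hl]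
      rfl
  simp [x, incMat, (G.ne_of_adj hac).symm, hcb] at hxbc

theorem stmt11 {V : Type*} [Fintype V] [DecidableEq V] (G : SimpleGraph V)
    [DecidableRel G.Adj] (r : ℕ) (hr : 2 ≤ r) (hreg : G.IsRegularOfDegree r)
    (hconn : G.Connected) (hbip : G.Colorable 2)
    (d : ℕ) (q : Fin (d + 1) → ℝ) (f : Fin (d + 1) → Matrix V V ℝ)
    (hqa : StrictAnti q)
    (hfs : ∀ i, (f i).IsSymm) (hfi : ∀ i, f i * f i = f i)
    (hfo : ∀ i j, i ≠ j → f i * f j = 0) (hfsum : ∑ i, f i = 1)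
    (hQ : incMat G * (incMat G)ᵀ = ∑ i, q i • f i) :
    ∀ e : G.edgeSet, ∃ i : Fin (d + 1), i ≠ 0 ∧ i ≠ Fin.last d ∧
      f i *ᵥ (fun v => incMat G v e) ≠ 0 :=
  stmt11_general G r hr hreg hbip d q f hqa hfi hfo hfsum hQ
end

section
/- For all integers q ≥ 1 and r ≥ 2, both real roots of the quadratic equation t² − (3r + q − 2)·t + (2r² − 2r + (r−1)·q) = 0 (equivalently, of (t+2−2r)(t−r) + (r−t−1)·q = 0) are irrational; explicitly, the numbers (3r + q − 2 ± √((q+r−2)² + 4q))/2 are irrational. -/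
/-!
With `n = q + r - 2 ≥ q`, the discriminant `n² + 4q` lies strictly between `n²` and `(n + 2)²`,
and it is not `(n + 1)²` because `4q ≠ 2n + 1` by parity. So its square root is irrational,
and so are both roots `(3r + q - 2 ± √(n² + 4q)) / 2`.
-/

theorem Int.not_isSquare_sq_add_four_mul {n q : ℤ} (hq : 0 < q) (hqn : q ≤ n) :
    ¬IsSquare (n ^ 2 + 4 * q) := by
  rintro ⟨s, hs⟩
  wlog hs0 : 0 ≤ s generalizing s
  · exact this (-s) (by rw [hs]; ring) (by omega)
  have hlo : n < s := by nlinarith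
  have hhi : s < n + 2 := by nlinarith
  obtain rfl : s = n + 1 := by omega
  have : 4 * q = 2 * n + 1 := by linarith
  omega

theorem Irrational.intCast_add_div_two {x : ℝ} (hx : Irrational x) (a : ℤ) :
    Irrational ((a + x) / 2) := by
  simpa using (hx.intCast_add a).div_natCast (m := 2) two_ne_zero

theorem stmt16 (q r : ℤ) (hq : 1 ≤ q) (hr : 2 ≤ r) :
    Irrational ((3 * (r : ℝ) + (q : ℝ) - 2 +
        Real.sqrt (((q : ℝ) + (r : ℝ) - 2) ^ 2 + 4 * (q : ℝ))) / 2) ∧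
    Irrational ((3 * (r : ℝ) + (q : ℝ) - 2 -
        Real.sqrt (((q : ℝ) + (r : ℝ) - 2) ^ 2 + 4 * (q : ℝ))) / 2) := by
  have hsqrt : Irrational (Real.sqrt (((q : ℝ) + r - 2) ^ 2 + 4 * q)) := by
    have hnonneg : 0 ≤ (q + r - 2) ^ 2 + 4 * q := by positivity
    have := irrational_sqrt_intCast_iff.mpr
      ⟨Int.not_isSquare_sq_add_four_mul (n := q + r - 2) (by omega) (by omega), hnonneg⟩
    exact_mod_cast this
  have hcoef : ((3 * r + q - 2 : ℤ) : ℝ) = 3 * r + q - 2 := by push_cast; ring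
  constructor
  · simpa [hcoef] using hsqrt.intCast_add_div_two (3 * r + q - 2)
  · simpa [hcoef, ← sub_eq_add_neg] using hsqrt.neg.intCast_add_div_two (3 * r + q - 2)
end
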